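/- The linear operator R on the 2×2 matrix algebra M₂(F) defined on matrix units by R(e₁₁) = e₁₂, R(e₁₂) = 0, R(e₂₁) = 0, R(e₂₂) = −e₁₂ is a Rota–Baxter operator of weight 0 on the Jordan algebra M₂(F)^(+) (with product a∘b = (ab+ba)/2), but it is not a Rota–Baxter operator of weight 0 on the associative algebra M₂(F). -/

import Mathlib

/-- The matrix unit `eᵢⱼ` in `M₂(F)`. -/
def E (F : Type*) [Field F] (i j : Fin 2) : Matrix (Fin 2) (Fin 2) F :=
  Matrix.single i j 1

/-!
`R` has rank one: `R x = (x₁₁ - x₂₂) e₁₂`. Since `e₁₂² = 0`, every product `R x ∘ R y` vanishes,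
and the right-hand side of the Jordan identity vanishes because `R` kills the Jordan multiples
`e₁₂ ∘ a`, whose two diagonal entries are equal. In the associative algebra, however,
`R e₁₁ · R e₂₁ = 0` while `R (R e₁₁ · e₂₁) = R e₁₁ = e₁₂`.
-/

theorem jordan_rotaBaxter_of_eq_smul_of_mul_self_eq_zero {K A : Type*} [CommRing K] [Ring A]
    [Algebra K A] (R : A →ₗ[K] A) (φ : A → K) (n : A) (hR : ∀ x, R x = φ x • n)
    (hn : n * n = 0) (hRn : ∀ a, R (n * a + a * n) = 0) (c : K) (x y : A) :
    c • (R x * R y + R y * R x) = R (c • (R x * y + y * R x) + c • (x * R y + R y * x)) := by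
  have hjordan : c • (R x * y + y * R x) + c • (x * R y + R y * x) =
      (c * φ x) • (n * y + y * n) + (c * φ y) • (n * x + x * n) := by
    simp only [hR, smul_mul_assoc, mul_smul_comm, smul_add, mul_smul]
    abel
  rw [hjordan, map_add, map_smul, map_smul, hRn, hRn, hR, hR, smul_mul_smul_comm,
    smul_mul_smul_comm, hn]
  simp

section MatrixUnits

variable {F : Type*} [Field F]

theorem E_zero_one_mul_self : E F 0 1 * E F 0 1 = 0 := by
  simp [E]

theorem E_zero_one_mul_E_one_zero : E F 0 1 * E F 1 0 = E F 0 0 := by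
  simp [E]

theorem E_ne_zero (i j : Fin 2) : E F i j ≠ 0 := fun h =>
  one_ne_zero (by simpa [E] using congrFun (congrFun h i) j : (1 : F) = 0)

theorem apply_eq_smul_E_zero_one (R : Matrix (Fin 2) (Fin 2) F →ₗ[F] Matrix (Fin 2) (Fin 2) F)
    (h11 : R (E F 0 0) = E F 0 1) (h12 : R (E F 0 1) = 0)
    (h21 : R (E F 1 0) = 0) (h22 : R (E F 1 1) = -E F 0 1) (x : Matrix (Fin 2) (Fin 2) F) :
    R x = (x 0 0 - x 1 1) • E F 0 1 := by
  have hsingle : ∀ i j (c : F), Matrix.single i j c = c • E F i j := fun i j c => by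
    simp [E, Matrix.smul_single]
  rw [congrArg R (Matrix.matrix_eq_sum_single x)]
  simp only [Fin.sum_univ_two, hsingle, map_add, map_smul, h11, h12, h21, h22]
  module

theorem E_zero_one_jordan_diag_eq (a : Matrix (Fin 2) (Fin 2) F) :
    (E F 0 1 * a + a * E F 0 1) 0 0 = (E F 0 1 * a + a * E F 0 1) 1 1 := by
  simp [E]

end MatrixUnits

theorem zhelyabin_example {F : Type*} [Field F]
    (R : Matrix (Fin 2) (Fin 2) F →ₗ[F] Matrix (Fin 2) (Fin 2) F)
    (h11 : R (E F 0 0) = E F 0 1) (h12 : R (E F 0 1) = 0)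
    (h21 : R (E F 1 0) = 0) (h22 : R (E F 1 1) = -E F 0 1) :
    (∀ x y : Matrix (Fin 2) (Fin 2) F,
      (2 : F)⁻¹ • (R x * R y + R y * R x) =
        R ((2 : F)⁻¹ • (R x * y + y * R x) + (2 : F)⁻¹ • (x * R y + R y * x))) ∧
    ¬ (∀ x y : Matrix (Fin 2) (Fin 2) F, R x * R y = R (R x * y + x * R y)) := by
  have hR := apply_eq_smul_E_zero_one R h11 h12 h21 h22
  constructor
  · refine jordan_rotaBaxter_of_eq_smul_of_mul_self_eq_zero R _ _ hR E_zero_one_mul_self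
      (fun a => ?_) _
    rw [hR, E_zero_one_jordan_diag_eq, sub_self, zero_smul]
  · intro h
    have h' := h (E F 0 0) (E F 1 0)
    rw [h11, h21, mul_zero, mul_zero, add_zero, E_zero_one_mul_E_one_zero, h11] at h'
    exact E_ne_zero 0 1 h'.symm
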